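/- For Gaussian densities on ℝ: χ_{N(0,1)}(N(μ₁,σ₁²), N(μ₂,σ₂²)) = exp( −(μ₁²(σ₂²−1) + 2μ₁μ₂ + μ₂²(σ₁²−1)) / (2σ₁²(σ₂²−1) − 2σ₂²) ) / √(σ₁² + σ₂² − σ₁²σ₂²) − 1, whenever σ₁² + σ₂² − σ₁²σ₂² > 0. -/

import Mathlib

open MeasureTheory

/-- pdf of the standard Gaussian on ℝ. -/
noncomputable def gpdf (x : ℝ) : ℝ := Real.exp (-(x^2)/2) / Real.sqrt (2*Real.pi)

/-- pdf of the Gaussian with mean `μ` and standard deviation `σ`. -/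
noncomputable def gpdfμσ (μ σ x : ℝ) : ℝ :=
  Real.exp (-((x - μ)^2)/(2*σ^2)) / (σ * Real.sqrt (2*Real.pi))

lemma integral_exp_quadratic (a b c : ℝ) (ha : 0 < a) :
    ∫ x : ℝ, Real.exp (-a*x^2 + b*x + c) =
      Real.sqrt (Real.pi/a) * Real.exp (c + b^2/(4*a)) := by
  have h : ∀ x : ℝ, Real.exp (-a*x^2 + b*x + c) =
      Real.exp (-a*(x - b/(2*a))^2) * Real.exp (c + b^2/(4*a)) := by
    intro x
    rw [← Real.exp_add]
    congr 1
    field_simp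
    ring
  simp_rw [h, integral_mul_const]
  rw [integral_sub_right_eq_self (μ := volume) (fun y : ℝ => Real.exp (-a*y^2)) (b/(2*a)),
    integral_gaussian]

/-- Closed form of the pairwise correlation of two Gaussians with respect to `N(0,1)`. -/
theorem stmt17 (μ₁ μ₂ σ₁ σ₂ : ℝ) (h1 : 0 < σ₁) (h2 : 0 < σ₂)
    (h : 0 < σ₁^2 + σ₂^2 - σ₁^2*σ₂^2) :
    (∫ x, gpdfμσ μ₁ σ₁ x * gpdfμσ μ₂ σ₂ x / gpdf x) - 1 =
      Real.exp (-(μ₁^2*(σ₂^2 - 1) + 2*μ₁*μ₂ + μ₂^2*(σ₁^2 - 1)) /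
          (2*σ₁^2*(σ₂^2 - 1) - 2*σ₂^2)) /
        Real.sqrt (σ₁^2 + σ₂^2 - σ₁^2*σ₂^2) - 1 := by
  have hπ : 0 < Real.pi := Real.pi_pos
  have hs : 0 < Real.sqrt (2*Real.pi) := Real.sqrt_pos.mpr (by linarith)
  set D : ℝ := σ₁^2 + σ₂^2 - σ₁^2*σ₂^2 with hD
  set a : ℝ := D / (2*σ₁^2*σ₂^2) with haa
  set b : ℝ := μ₁/σ₁^2 + μ₂/σ₂^2 with hbb
  set c : ℝ := -(μ₁^2/(2*σ₁^2)) - μ₂^2/(2*σ₂^2) with hcc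
  have h1' : σ₁ ≠ 0 := ne_of_gt h1
  have h2' : σ₂ ≠ 0 := ne_of_gt h2
  have ha : 0 < a := by
    apply div_pos h
    positivity
  have key : ∀ x : ℝ, gpdfμσ μ₁ σ₁ x * gpdfμσ μ₂ σ₂ x / gpdf x =
      Real.exp (-a*x^2 + b*x + c) * (1 / (σ₁*σ₂*Real.sqrt (2*Real.pi))) := by
    intro x
    unfold gpdfμσ gpdf
    have hx : Real.exp (-x^2/2) ≠ 0 := Real.exp_ne_zero _
    rw [div_mul_div_comm, ← Real.exp_add]
    field_simp
    have harg : (-((x - μ₁) ^ 2 * (2 * σ₂ ^ 2)) + -((x - μ₂) ^ 2 * (2 * σ₁ ^ 2))) /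
          (2 * σ₁ ^ 2 * (2 * σ₂ ^ 2)) = (-(a * x ^ 2) + b * x + c) + -x ^ 2 / 2 := by
      rw [haa, hbb, hcc, hD]
      field_simp
      ring
    rw [← Real.exp_add]
    congr 1
    rw [haa, hbb, hcc, hD]
    field_simp
    ring
  simp_rw [key]
  rw [integral_mul_const, integral_exp_quadratic a b c ha]
  have hDs : (0:ℝ) < Real.sqrt D := Real.sqrt_pos.mpr h
  have hsq : Real.sqrt (Real.pi/a) = σ₁*σ₂*Real.sqrt (2*Real.pi)/Real.sqrt D := by
    have e1 : Real.pi/a = (σ₁*σ₂*Real.sqrt (2*Real.pi))^2/D := by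
      rw [haa, mul_pow, Real.sq_sqrt (by positivity)]
      field_simp
    rw [e1, Real.sqrt_div (by positivity), Real.sqrt_sq (by positivity)]
  have hden : 2*σ₁^2*(σ₂^2-1) - 2*σ₂^2 ≠ 0 := by
    have e2 : 2*σ₁^2*(σ₂^2-1) - 2*σ₂^2 = -(2*D) := by rw [hD]; ring
    rw [e2]
    exact neg_ne_zero.mpr (by positivity)
  have hexp : c + b^2/(4*a) =
      -(μ₁^2*(σ₂^2-1) + 2*μ₁*μ₂ + μ₂^2*(σ₁^2-1)) / (2*σ₁^2*(σ₂^2-1) - 2*σ₂^2) := by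
    have hD0 : σ₁^2 + σ₂^2 - σ₁^2*σ₂^2 ≠ 0 := by rw [← hD]; exact ne_of_gt h
    have hden' : 2*σ₁^2*(σ₂^2-1) - 2*σ₂^2 = -(2*(σ₁^2 + σ₂^2 - σ₁^2*σ₂^2)) := by ring
    rw [haa, hbb, hcc, hD, hden']
    field_simp
    ring
  rw [hsq, hexp]
  congr 1
  field_simp
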